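/- Let s(z,w) be a kernel with the reproducing property for 𝒜(Ω,ν) (i.e., G(z) = ∫_T G(w) s(z,w) dν(w) for all G ∈ 𝒜(Ω,ν), z ∈ Ω), and let φ = h·ψ where ψ is a defining function of V and h ∈ 𝒜(Ω,ν) is nonvanishing on (Ω∪T)∖V. Then for every k ∈ ℕ₀, the kernel c_k(z,w) := (φ(w)^k / φ(z)^k) · s(z,w) reproduces every F ∈ 𝒜_k(Ω*,ν): F(z) = ∫_T F(w) c_k(z,w) dν(w) for all z ∈ Ω∖V. -/

import Mathlib

/-! The reproducing property of `s` applied to `hᵏ G ∈ 𝒜` gives the claim: off the `ν`-null set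
`T ∩ V` we have `hᵏ G = (h ψ)ᵏ F = φᵏ F`, and at `z ∉ V` one divides by `φ(z)ᵏ ≠ 0`. -/

open MeasureTheory

theorem ae_mem_diff_of_measure_compl_eq_zero {α : Type*} [MeasurableSpace α] {μ : Measure α}
    {T S : Set α} (hT : μ Tᶜ = 0) (hTS : μ (T ∩ S) = 0) : ∀ᵐ w ∂μ, w ∈ T \ S := by
  filter_upwards [measure_eq_zero_iff_ae_notMem.mp hT, measure_eq_zero_iff_ae_notMem.mp hTS]
    with w hwT hwTS
  exact ⟨not_not.mp hwT, fun hwS => hwTS ⟨not_not.mp hwT, hwS⟩⟩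

theorem differentiableOn_continuousOn_pow_mul {𝕜 E : Type*} [NontriviallyNormedField 𝕜]
    [NormedAddCommGroup E] [NormedSpace 𝕜 E] {s t : Set E} {h G : E → 𝕜}
    (hh : DifferentiableOn 𝕜 h s ∧ ContinuousOn h t)
    (hG : DifferentiableOn 𝕜 G s ∧ ContinuousOn G t) (k : ℕ) :
    DifferentiableOn 𝕜 (fun w => h w ^ k * G w) s ∧ ContinuousOn (fun w => h w ^ k * G w) t :=
  ⟨(hh.1.pow k).mul hG.1, (hh.2.pow k).mul hG.2⟩

theorem eq_integral_mul_div_mul_of_eq_integral {α 𝕜 : Type*} [MeasurableSpace α] [RCLike 𝕜]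
    {ν : Measure α} {F H φ K : α → 𝕜} {z : α}
    (hrep : H z = ∫ w, H w * K w ∂ν) (hae : ∀ᵐ w ∂ν, H w = φ w * F w)
    (hz : H z = φ z * F z) (hφz : φ z ≠ 0) :
    F z = ∫ w, F w * (φ w / φ z * K w) ∂ν := calc
  F z = H z / φ z := by rw [hz, mul_div_cancel_left₀ _ hφz]
  _ = (∫ w, φ w * F w * K w ∂ν) / φ z := by
    rw [hrep, integral_congr_ae (hae.mono fun w hw => by rw [hw])]
  _ = ∫ w, F w * (φ w / φ z * K w) ∂ν := by
    rw [← integral_div]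
    congr 1 with w
    ring

theorem twisted_kernel_reproduces_general
    {n : ℕ} (Ω T : Set (Fin n → ℂ)) (ν : Measure (Fin n → ℂ))
    (ψ h : (Fin n → ℂ) → ℂ)
    (hνT : ν Tᶜ = 0) (hνV : ν (T ∩ ψ ⁻¹' {0}) = 0)
    (𝒜 : Set ((Fin n → ℂ) → ℂ))
    (h𝒜 : 𝒜 = {F | DifferentiableOn ℂ F Ω ∧ ContinuousOn F (Ω ∪ T)})
    (hh : h ∈ 𝒜) (hhnv : ∀ z ∈ (Ω ∪ T) \ ψ ⁻¹' {0}, h z ≠ 0)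
    (s : (Fin n → ℂ) → (Fin n → ℂ) → ℂ)
    (hrep : ∀ G ∈ 𝒜, ∀ z ∈ Ω, G z = ∫ w, G w * s z w ∂ν)
    (k : ℕ) (𝒜k : Set ((Fin n → ℂ) → ℂ))
    (h𝒜k : 𝒜k = {F | (∃ G ∈ 𝒜,
        ∀ z ∈ (Ω \ ψ ⁻¹' {0}) ∪ (T \ ψ ⁻¹' {0}), ψ z ^ k * F z = G z) ∧ MemLp F 2 ν}) :
    ∀ F ∈ 𝒜k, ∀ z ∈ Ω \ ψ ⁻¹' {0},
      F z = ∫ w, F w * ((h w * ψ w) ^ k / (h z * ψ z) ^ k * s z w) ∂ν := by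
  intro F hF z hz
  subst h𝒜 h𝒜k
  obtain ⟨⟨G, hG, hGF⟩, -⟩ := hF
  refine eq_integral_mul_div_mul_of_eq_integral (H := fun w => h w ^ k * G w)
    (hrep _ (differentiableOn_continuousOn_pow_mul hh hG k) z hz.1) ?_ ?_
    (pow_ne_zero k (mul_ne_zero (hhnv z ⟨Or.inl hz.1, hz.2⟩) hz.2))
  · filter_upwards [ae_mem_diff_of_measure_compl_eq_zero hνT hνV] with w hw
    rw [← hGF w (Or.inr hw)]
    ring
  · rw [← hGF z (Or.inl hz)]
    ring

/-- If `s(z,·)` reproduces every `G ∈ 𝒜(Ω,ν)` at points of `Ω`, and `φ = h·ψ` with `h ∈ 𝒜`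
nonvanishing on `(Ω∪T)∖V` (where `V = ψ⁻¹(0)`, `ν(T∩V) = 0`), then for each `k` the kernel
`c_k(z,w) = (φ(w)ᵏ/φ(z)ᵏ) s(z,w)` reproduces every `F ∈ 𝒜ₖ(Ω*,ν)` at points of `Ω∖V`. -/
theorem twisted_kernel_reproduces
    {n : ℕ} (Ω T : Set (Fin n → ℂ)) (ν : Measure (Fin n → ℂ)) [IsFiniteMeasure ν]
    (ψ h : (Fin n → ℂ) → ℂ)
    (hνT : ν Tᶜ = 0) (hνV : ν (T ∩ ψ ⁻¹' {0}) = 0)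
    (𝒜 : Set ((Fin n → ℂ) → ℂ))
    (h𝒜 : 𝒜 = {F | DifferentiableOn ℂ F Ω ∧ ContinuousOn F (Ω ∪ T)})
    (hh : h ∈ 𝒜) (hhnv : ∀ z ∈ (Ω ∪ T) \ ψ ⁻¹' {0}, h z ≠ 0)
    (s : (Fin n → ℂ) → (Fin n → ℂ) → ℂ)
    (hrep : ∀ G ∈ 𝒜, ∀ z ∈ Ω, G z = ∫ w, G w * s z w ∂ν)
    (k : ℕ) (𝒜k : Set ((Fin n → ℂ) → ℂ))
    (h𝒜k : 𝒜k = {F | (∃ G ∈ 𝒜,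
        ∀ z ∈ (Ω \ ψ ⁻¹' {0}) ∪ (T \ ψ ⁻¹' {0}), ψ z ^ k * F z = G z) ∧ MemLp F 2 ν}) :
    ∀ F ∈ 𝒜k, ∀ z ∈ Ω \ ψ ⁻¹' {0},
      F z = ∫ w, F w * ((h w * ψ w) ^ k / (h z * ψ z) ^ k * s z w) ∂ν :=
  twisted_kernel_reproduces_general Ω T ν ψ h hνT hνV 𝒜 h𝒜 hh hhnv s hrep k 𝒜k h𝒜k
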